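/- arXiv:2307.04917 — 2 statements merged into one kernel-verified Lean document; each statement's English description precedes it below -/
import Mathlib

section
/- Let λ > 0, N ∈ ℕ, and let γ, r : ℤ → ℝ with r[k] ∈ 2λℤ for all k, and set y[k] = γ[k] − r[k]. If |(Δ^N γ)[k]| < λ for all k, then (Δ^N γ)[k] = M_λ((Δ^N y)[k]) for all k. -/
noncomputable def cmod (lam g : ℝ) : ℝ :=
  2 * lam * (Int.fract (g / (2 * lam) + 1 / 2) - 1 / 2)

def fdiff (f : ℤ → ℝ) : ℤ → ℝ := fun k => f (k + 1) - f k

def mdiff (m : ℤ → ℤ) : ℤ → ℤ := fun k => m (k + 1) - m k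

lemma fdiff_iter_sub (N : ℕ) (f g : ℤ → ℝ) :
    fdiff^[N] (fun k => f k - g k) = fun k => fdiff^[N] f k - fdiff^[N] g k := by
  induction N generalizing f g with
  | zero => simp
  | succ n ih =>
    rw [Function.iterate_succ_apply, Function.iterate_succ_apply,
      Function.iterate_succ_apply (f := fdiff) (x := g)]
    have : fdiff (fun k => f k - g k) = fun k => fdiff f k - fdiff g k := by
      funext k; simp [fdiff]; ring
    rw [this, ih]

lemma fdiff_iter_int (N : ℕ) (c : ℝ) (m : ℤ → ℤ) :
    fdiff^[N] (fun k => c * (m k : ℝ)) = fun k => c * ((mdiff^[N] m k : ℤ) : ℝ) := by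
  induction N generalizing m with
  | zero => simp
  | succ n ih =>
    rw [Function.iterate_succ_apply, Function.iterate_succ_apply]
    have : fdiff (fun k => c * (m k : ℝ)) = fun k => c * ((mdiff m k : ℤ) : ℝ) := by
      funext k; simp [fdiff, mdiff]; ring
    rw [this, ih]

lemma cmod_sub_int (lam g : ℝ) (hlam : 0 < lam) (m : ℤ) :
    cmod lam (g - 2 * lam * m) = cmod lam g := by
  unfold cmod
  have h2 : (2 * lam) ≠ 0 := by positivity
  have : (g - 2 * lam * m) / (2 * lam) + 1 / 2 = (g / (2 * lam) + 1 / 2) - m := by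
    field_simp; ring
  rw [this, Int.fract_sub_intCast]

lemma cmod_eq_self (lam g : ℝ) (hlam : 0 < lam) (hg : |g| < lam) :
    cmod lam g = g := by
  unfold cmod
  have h2 : (0:ℝ) < 2 * lam := by positivity
  have habs := abs_lt.mp hg
  have h0 : 0 ≤ g / (2 * lam) + 1 / 2 := by
    rw [div_add_div _ _ (ne_of_gt h2) (by norm_num : (2:ℝ) ≠ 0)]
    apply div_nonneg _ (by positivity)
    nlinarith [habs.1]
  have h1 : g / (2 * lam) + 1 / 2 < 1 := by
    rw [div_add' _ _ _ (ne_of_gt h2)]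
    rw [div_lt_one h2]
    nlinarith [habs.2]
  rw [Int.fract_eq_self.mpr ⟨h0, h1⟩]
  field_simp
  ring

theorem fdiff_eq_cmod_fdiff (lam : ℝ) (hlam : 0 < lam) (N : ℕ) (γ r y : ℤ → ℝ)
    (hr : ∀ k, ∃ m : ℤ, r k = 2 * lam * m)
    (hy : ∀ k, y k = γ k - r k)
    (hsmall : ∀ k, |(fdiff^[N] γ) k| < lam) :
    ∀ k, (fdiff^[N] γ) k = cmod lam ((fdiff^[N] y) k) := by
  intro k
  choose m hm using hr
  have hyf : y = fun j => γ j - (fun j => 2 * lam * (m j : ℝ)) j := by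
    funext j; rw [hy j, hm j]
  have h1 : fdiff^[N] y k = fdiff^[N] γ k - 2 * lam * ((mdiff^[N] m k : ℤ) : ℝ) := by
    rw [hyf, fdiff_iter_sub, fdiff_iter_int]
  rw [h1, cmod_sub_int lam _ hlam, cmod_eq_self lam _ hlam (hsmall k)]
end

section
/- Let 0 < Ω_L < Ω_U and let P be an even positive integer. If 2Ω_U/P ≤ 4πe Ω_L/(2πeP − 1) (i.e., the admissible sampling interval for even P is nonempty), then P ≤ ⌊Ω_U/(2πe(Ω_U − Ω_L))⌋. -/
theorem even_P_bound (ΩL ΩU : ℝ) (hΩL : 0 < ΩL) (hΩ : ΩL < ΩU) (P : ℤ)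
    (heven : Even P) (hP : 1 ≤ P)
    (hne : 2 * ΩU / (P : ℝ) ≤ 4 * Real.pi * Real.exp 1 * ΩL / (2 * Real.pi * Real.exp 1 * (P : ℝ) - 1)) :
    P ≤ ⌊ΩU / (2 * Real.pi * Real.exp 1 * (ΩU - ΩL))⌋ := by
  have hpi := Real.pi_gt_three
  have he := Real.exp_one_gt_d9
  have hP1 : (1:ℝ) ≤ (P:ℝ) := by exact_mod_cast hP
  have hc : (1:ℝ) < 2 * Real.pi * Real.exp 1 := by nlinarith
  have hPpos : (0:ℝ) < (P:ℝ) := by linarith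
  have hden : 0 < 2 * Real.pi * Real.exp 1 * (P:ℝ) - 1 := by nlinarith
  rw [div_le_div_iff₀ hPpos hden] at hne
  rw [Int.le_floor, le_div_iff₀ (by nlinarith : (0:ℝ) < 2 * Real.pi * Real.exp 1 * (ΩU - ΩL))]
  nlinarith [hne]
end
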